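/- Let E be a finite set, F a nonempty family of finite subsets of E, w : E → ℝ, and M a real number with M > ∑_{e ∈ E} |w e|. If S* ∈ F maximizes the shifted objective ∑_{e ∈ S} (w e + M) over all S ∈ F, then (a) S* has maximum cardinality among members of F, and (b) S* maximizes ∑_{e ∈ S} w e among all members of F of maximum cardinality. -/
import Mathlib


/-- If `M` exceeds the total absolute weight, then a maximizer of the shifted
objective `∑ (w e + M)` over a nonempty family `F` has maximum cardinality in
`F`, and maximizes `∑ w e` among the maximum-cardinality members of `F`. -/
theorem shifted_objective_max {E : Type*} [Fintype E] [DecidableEq E]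
    (F : Finset (Finset E)) (hF : F.Nonempty) (w : E → ℝ) (M : ℝ)
    (hM : M > ∑ e : E, |w e|)
    (Sstar : Finset E) (hSstar : Sstar ∈ F)
    (hmax : ∀ S ∈ F, ∑ e ∈ S, (w e + M) ≤ ∑ e ∈ Sstar, (w e + M)) :
    (∀ S ∈ F, S.card ≤ Sstar.card) ∧
    (∀ S ∈ F, (∀ S' ∈ F, S'.card ≤ S.card) → ∑ e ∈ S, w e ≤ ∑ e ∈ Sstar, w e) := by
  have hshift : ∀ S : Finset E, ∑ e ∈ S, (w e + M) = (∑ e ∈ S, w e) + M * S.card := by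
    intro S
    rw [Finset.sum_add_distrib, Finset.sum_const, nsmul_eq_mul, mul_comm]
  have key : ∀ S : Finset E, ∑ e ∈ Sstar, w e - ∑ e ∈ S, w e ≤ ∑ e : E, |w e| := by
    intro S
    have e1 := Finset.sum_inter_add_sum_sdiff Sstar S w
    have e2 := Finset.sum_inter_add_sum_sdiff S Sstar w
    have hinter : ∑ e ∈ S ∩ Sstar, w e = ∑ e ∈ Sstar ∩ S, w e := by
      rw [Finset.inter_comm]
    have b1 : ∑ e ∈ Sstar \ S, w e ≤ ∑ e ∈ Sstar \ S, |w e| :=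
      Finset.sum_le_sum fun _ _ => le_abs_self _
    have b2 : -∑ e ∈ S \ Sstar, w e ≤ ∑ e ∈ S \ Sstar, |w e| := by
      rw [← Finset.sum_neg_distrib]
      exact Finset.sum_le_sum fun _ _ => neg_le_abs _
    have hdisj : Disjoint (Sstar \ S) (S \ Sstar) := disjoint_sdiff_sdiff
    have b3 : ∑ e ∈ Sstar \ S, |w e| + ∑ e ∈ S \ Sstar, |w e| ≤ ∑ e : E, |w e| := by
      rw [← Finset.sum_union hdisj]
      exact Finset.sum_le_sum_of_subset_of_nonneg (Finset.subset_univ _)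
        (fun _ _ _ => abs_nonneg _)
    linarith
  have hcard : ∀ S ∈ F, S.card ≤ Sstar.card := by
    intro S hS
    by_contra h
    push_neg at h
    have h1 : (Sstar.card : ℝ) + 1 ≤ (S.card : ℝ) := by exact_mod_cast h
    have h2 := hmax S hS
    rw [hshift, hshift] at h2
    have hMpos : (0:ℝ) ≤ M :=
      le_of_lt (lt_of_le_of_lt (Finset.sum_nonneg fun _ _ => abs_nonneg _) hM)
    have h3 := key S
    nlinarith [mul_le_mul_of_nonneg_left h1 hMpos]
  refine ⟨hcard, fun S hS hSmax => ?_⟩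
  have hc : S.card = Sstar.card := le_antisymm (hcard S hS) (hSmax Sstar hSstar)
  have h2 := hmax S hS
  rw [hshift, hshift, hc] at h2
  linarith
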